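/- arXiv:1306.2887 — 3 statements merged into one kernel-verified Lean document; each statement's English description precedes it below -/
import Mathlib

section
/- Let 1 ≤ l ≤ n and let A be an n × n random matrix (complex entries, arbitrary distribution) with columns A₁,…,A_n. Suppose that to each pair (j₀, J₀) ∈ Λ(n,l) there corresponds an integer l' ≤ n and an l' × n matrix P = P(n, l, A, j₀, J₀) such that (i) ‖P‖ ≤ 1 and (ii) P A_j = 0 for every j ∉ {j₀} ∪ J₀. Let α, κ > 0, w > 0, and set W = w/(κ l) + √2/α. Then P_A( L_{W,w} ) ≤ 2n · E_{(j₀,J₀)} P_A( B_{α,κ}^c | (j₀, J₀) ), where L_{W,w} = { ∃ v ∈ ℂⁿ, ‖v‖₂ = 1, with ‖v‖_∞ > W √(l/n) and ‖Av‖₂ ≤ w/√n } and B_{α,κ} = { ‖P A_{j₀}‖₂ ≥ α ‖P A_{J₀}‖ and ‖P A_{j₀}‖₂ ≥ κ √l }, with A_{J₀} the submatrix of A formed by the columns indexed by J₀. -/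
/-!
On the localization event pick a unit vector `v` with `‖A v‖₂ ≤ w / √n` and a coordinate `j₀`
with `|v j₀| = ‖v‖_∞ > W √(l/n)`.  For `J₀ ∌ j₀`, the kernel condition on `P` gives
`P A v = v j₀ • P A_{j₀} + P A_{J₀} v_{J₀}`, and on the balancing event `B_{α,κ}` this forces
`|v j₀| ≤ W √(l/n)` whenever `‖v_{J₀}‖₂² ≤ 2 l / n`.  The average of `‖v_{J₀}‖₂²` over the
`(l-1)`-subsets of `[n] \ {j₀}` is `(l-1)/(n-1) ≤ l/n`, so by Markov's inequality at least half of
them qualify: every point of `L_{W,w}` lies in `B_{α,κ}ᶜ` for at least `C(n-1,l-1)/2` pairs.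
Integrating this count and using `|Λ(n,l)| = n C(n-1,l-1)` gives the bound.
-/

open MeasureTheory ProbabilityTheory

noncomputable section

/-- The Euclidean norm of a complex vector. -/
def e2 {ι : Type*} [Fintype ι] (v : ι → ℂ) : ℝ := Real.sqrt (∑ i, ‖v i‖ ^ 2)

/-- The sup norm of a complex vector. -/
def einf {n : ℕ} (v : Fin n → ℂ) : ℝ := ⨆ i, ‖v i‖

/-- The operator norm of a complex matrix, `‖A‖ = max_{‖x‖₂ = 1} ‖Ax‖₂`. -/
def opC {ι κ : Type*} [Fintype ι] [Fintype κ] (A : Matrix ι κ ℂ) : ℝ :=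
  sSup {r : ℝ | ∃ x : κ → ℂ, e2 x = 1 ∧ r = e2 (A.mulVec x)}

/-- `Λ(n,l)`: the set of pairs `(j₀, J₀)` with `j₀ ∈ [n]`, `J₀ ⊆ [n] \ {j₀}`,
`|J₀| = l - 1`. -/
def Lam (n l : ℕ) : Type :=
  {p : Fin n × Finset (Fin n) // p.1 ∉ p.2 ∧ p.2.card = l - 1}

instance (n l : ℕ) : Fintype (Lam n l) := by unfold Lam; infer_instance

open Matrix Finset
open scoped ENNReal

section Norms

variable {ι κ : Type*} [Fintype ι] [Fintype κ]

lemma e2_eq_norm (v : ι → ℂ) : e2 v = ‖WithLp.toLp 2 v‖ := by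
  rw [EuclideanSpace.norm_eq]; rfl

lemma e2_nonneg (v : ι → ℂ) : 0 ≤ e2 v := Real.sqrt_nonneg _

lemma e2_smul (c : ℂ) (v : ι → ℂ) : e2 (c • v) = ‖c‖ * e2 v := by
  simp only [e2_eq_norm, WithLp.toLp_smul, norm_smul]

lemma e2_sub_le (v w : ι → ℂ) : e2 (v - w) ≤ e2 v + e2 w := by
  simpa only [e2_eq_norm, WithLp.toLp_sub] using norm_sub_le _ _

open scoped Matrix.Norms.L2Operator in
lemma e2_mulVec_le_l2_opNorm [DecidableEq κ] (A : Matrix ι κ ℂ) (x : κ → ℂ) :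
    e2 (A *ᵥ x) ≤ ‖A‖ * e2 x := by
  rw [e2_eq_norm, e2_eq_norm]
  exact A.l2_opNorm_mulVec (WithLp.toLp 2 x)

open scoped Matrix.Norms.L2Operator in
lemma l2_opNorm_le_opC [DecidableEq κ] (A : Matrix ι κ ℂ) : ‖A‖ ≤ opC A := by
  have hbdd : BddAbove {r : ℝ | ∃ x : κ → ℂ, e2 x = 1 ∧ r = e2 (A *ᵥ x)} :=
    ⟨‖A‖, fun r ⟨x, hx, hr⟩ => hr ▸ by simpa [hx] using e2_mulVec_le_l2_opNorm A x⟩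
  refine ContinuousLinearMap.opNorm_le_of_unit_norm
    (Real.sSup_nonneg fun r ⟨x, _, hr⟩ => hr ▸ e2_nonneg _)
    fun x hx => le_csSup hbdd ⟨x.ofLp, by rwa [e2_eq_norm], ?_⟩
  rw [e2_eq_norm]
  rfl

lemma e2_mulVec_le (A : Matrix ι κ ℂ) (x : κ → ℂ) : e2 (A *ᵥ x) ≤ opC A * e2 x := by
  classical
  exact (e2_mulVec_le_l2_opNorm A x).trans
    (mul_le_mul_of_nonneg_right (l2_opNorm_le_opC A) (e2_nonneg x))

end Norms

section Decomposition

variable {m ι : Type*} [Fintype ι] [DecidableEq ι]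

lemma mulVec_eq_smul_transpose_add_submatrix_mulVec {M : Matrix m ι ℂ} {j₀ : ι} {J : Finset ι}
    (hj₀ : j₀ ∉ J) (hM : ∀ j, j ≠ j₀ → j ∉ J → Mᵀ j = 0) (v : ι → ℂ) :
    M *ᵥ v = v j₀ • Mᵀ j₀ + M.submatrix id ((↑) : J → ι) *ᵥ (fun j => v j) := by
  ext r
  have hzero : ∀ j ∉ insert j₀ J, M r j * v j = 0 := fun j hj => by
    rw [mem_insert, not_or] at hj
    rw [← transpose_apply M, hM j hj.1 hj.2, Pi.zero_apply, zero_mul]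
  simp only [mulVec, dotProduct, Pi.add_apply, Pi.smul_apply, smul_eq_mul, submatrix_apply, id,
    transpose_apply]
  rw [← sum_subset (subset_univ _) fun j _ hj => hzero j hj, sum_insert hj₀,
    sum_coe_sort J fun j => M r j * v j, mul_comm]

lemma norm_mul_e2_transpose_le [Fintype m] {M : Matrix m ι ℂ} {j₀ : ι} {J : Finset ι}
    (hj₀ : j₀ ∉ J) (hM : ∀ j, j ≠ j₀ → j ∉ J → Mᵀ j = 0) (v : ι → ℂ) :
    ‖v j₀‖ * e2 (Mᵀ j₀) ≤
      e2 (M *ᵥ v) + opC (M.submatrix id ((↑) : J → ι)) * e2 (fun j : J => v j) := by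
  rw [← e2_smul, eq_sub_of_add_eq (mulVec_eq_smul_transpose_add_submatrix_mulVec hj₀ hM v).symm]
  exact (e2_sub_le _ _).trans (by gcongr; exact e2_mulVec_le _ _)

end Decomposition

lemma le_mul_sqrt_div_of_mul_le {x q α κ w l n : ℝ} (hκ : 0 < κ) (hl : 0 < l) (hn : 0 < n)
    (hw : 0 ≤ w) (hq : κ * √l ≤ q) (h : x * q ≤ w / √n + q / α * √(2 * (l / n))) :
    x ≤ (w / (κ * l) + √2 / α) * √(l / n) := by
  have hq0 : 0 < q := (mul_pos hκ (Real.sqrt_pos.mpr hl)).trans_le hq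
  have hw' : w / √n ≤ w / (κ * l) * √(l / n) * q :=
    calc w / √n = w / (κ * l) * √(l / n) * (κ * √l) := by
          have := Real.sqrt_pos.mpr hn
          rw [Real.sqrt_div hl.le n]
          field_simp
          rw [Real.sq_sqrt hl.le]
      _ ≤ _ := by gcongr
  rw [Real.sqrt_mul zero_le_two] at h
  refine le_of_mul_le_mul_right ?_ hq0
  calc x * q ≤ w / √n + q / α * (√2 * √(l / n)) := h
    _ ≤ w / (κ * l) * √(l / n) * q + q / α * (√2 * √(l / n)) := by gcongr
    _ = _ := by ring

section Counting

variable {α : Type*} [DecidableEq α]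

lemma card_filter_mem_powersetCard_le {s : Finset α} {a : α} (ha : a ∈ s) (k : ℕ) :
    #{J ∈ s.powersetCard k | a ∈ J} ≤ (#s - 1).choose (k - 1) := by
  rw [← card_erase_of_mem ha, ← card_powersetCard]
  refine card_le_card_of_injOn (·.erase a) (fun J hJ => ?_) (fun J₁ hJ₁ J₂ hJ₂ h => ?_)
  · rw [mem_coe, mem_filter, mem_powersetCard] at hJ
    rw [mem_coe, mem_powersetCard]
    exact ⟨erase_subset_erase a hJ.1.1, by rw [card_erase_of_mem hJ.2, hJ.1.2]⟩
  · rw [mem_coe, mem_filter] at hJ₁ hJ₂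
    rw [← insert_erase hJ₁.2, ← insert_erase hJ₂.2]
    exact congrArg (insert a) h

lemma sum_powersetCard_sum_le (s : Finset α) (k : ℕ) {f : α → ℝ} (hf : ∀ a, 0 ≤ f a) :
    ∑ J ∈ s.powersetCard k, ∑ j ∈ J, f j ≤ (#s - 1).choose (k - 1) * ∑ j ∈ s, f j := by
  have hswap : ∑ J ∈ s.powersetCard k, ∑ j ∈ J, f j =
      ∑ j ∈ s, #{J ∈ s.powersetCard k | j ∈ J} * f j := by
    rw [sum_comm' (t' := s) (s' := fun j => {J ∈ s.powersetCard k | j ∈ J}) fun J j => ?_]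
    · simp_rw [sum_const, nsmul_eq_mul]
    · rw [mem_filter, mem_powersetCard]
      exact ⟨fun ⟨hJ, hj⟩ => ⟨⟨hJ, hj⟩, hJ.1 hj⟩, fun ⟨h, _⟩ => h⟩
  rw [hswap, mul_sum]
  gcongr with j hj
  · exact hf j
  · exact_mod_cast card_filter_mem_powersetCard_le hj k

lemma two_mul_le_choose_of_mul_le {n l b : ℕ} (hl2 : 2 ≤ l) (hln : l ≤ n)
    (hb : 2 * (l / n : ℝ) * b ≤ (n - 2).choose (l - 2)) : 2 * b ≤ (n - 1).choose (l - 1) := by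
  obtain ⟨k, rfl⟩ : ∃ k, l = k + 2 := ⟨l - 2, by omega⟩
  obtain ⟨m, rfl⟩ : ∃ m, n = m + k + 2 := ⟨n - (k + 2), by omega⟩
  simp only [Nat.add_sub_cancel, show m + k + 2 - 1 = m + k + 1 by omega,
    show k + 2 - 1 = k + 1 by omega] at hb ⊢
  have hchoose : ((m + k + 1) * (m + k).choose k : ℝ) = (m + k + 1).choose (k + 1) * (k + 1) := by
    exact_mod_cast Nat.add_one_mul_choose_eq (m + k) k
  push_cast at hb
  rw [mul_div_assoc', div_mul_eq_mul_div, div_le_iff₀ (by positivity)] at hb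
  suffices (2 * b : ℝ) ≤ (m + k + 1).choose (k + 1) by exact_mod_cast this
  have hb' := mul_le_mul_of_nonneg_right hb (by positivity : (0 : ℝ) ≤ m + k + 1)
  refine le_of_mul_le_mul_left ?_ (by positivity : (0 : ℝ) < (k + 2) * (m + k + 1))
  -- `hchoose` turns `hb'` into `2 l (n-1) b ≤ n (l-1) C(n-1,l-1)`, and `n (l-1) ≤ l (n-1)`.
  nlinarith [mul_nonneg (Nat.cast_nonneg m : (0 : ℝ) ≤ m)
    (Nat.cast_nonneg ((m + k + 1).choose (k + 1)) : (0 : ℝ) ≤ _)]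

lemma choose_le_two_mul_card_filter_sum_le [Fintype α] {l : ℕ} (hl1 : 1 ≤ l)
    (hln : l ≤ Fintype.card α) (a : α) {f : α → ℝ} (hf : ∀ x, 0 ≤ f x) (hsum : ∑ x, f x ≤ 1) :
    (Fintype.card α - 1).choose (l - 1) ≤
      2 * #{J ∈ (univ.erase a).powersetCard (l - 1) | ∑ j ∈ J, f j ≤ 2 * (l / Fintype.card α)} := by
  have hs : #(univ.erase a) = Fintype.card α - 1 := by
    rw [card_erase_of_mem (mem_univ a), card_univ]
  have hsplit := card_filter_add_card_filter_not (fun J => ∑ j ∈ J, f j ≤ 2 * (l / Fintype.card α))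
    (s := (univ.erase a).powersetCard (l - 1))
  rw [card_powersetCard, hs] at hsplit
  suffices 2 * #{J ∈ (univ.erase a).powersetCard (l - 1) |
      ¬ ∑ j ∈ J, f j ≤ 2 * (l / Fintype.card α)} ≤ (Fintype.card α - 1).choose (l - 1) by omega
  obtain rfl | hl2 := hl1.eq_or_lt
  · rw [filter_eq_empty_iff.mpr fun J hJ => ?_, card_empty]
    · exact Nat.zero_le _
    rw [Nat.sub_self, powersetCard_zero, mem_singleton] at hJ
    rw [hJ, sum_empty, not_not]
    positivity
  refine two_mul_le_choose_of_mul_le hl2 hln ?_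
  calc 2 * (l / Fintype.card α : ℝ) *
        #{J ∈ (univ.erase a).powersetCard (l - 1) | ¬ ∑ j ∈ J, f j ≤ 2 * (l / Fintype.card α)}
      ≤ ∑ J ∈ (univ.erase a).powersetCard (l - 1) with ¬ ∑ j ∈ J, f j ≤ 2 * (l / Fintype.card α),
          ∑ j ∈ J, f j := by
        rw [mul_comm, ← nsmul_eq_mul]
        exact card_nsmul_le_sum _ _ _ fun J hJ => (not_le.mp (mem_filter.mp hJ).2).le
    _ ≤ ∑ J ∈ (univ.erase a).powersetCard (l - 1), ∑ j ∈ J, f j :=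
        sum_le_sum_of_subset_of_nonneg (filter_subset _ _) fun J _ _ => sum_nonneg fun j _ => hf j
    _ ≤ (#(univ.erase a) - 1).choose (l - 1 - 1) * ∑ j ∈ univ.erase a, f j :=
        sum_powersetCard_sum_le _ _ hf
    _ ≤ (Fintype.card α - 2).choose (l - 2) * 1 := by
        rw [hs, Nat.sub_sub, Nat.sub_sub]
        exact mul_le_mul_of_nonneg_left
          ((sum_le_sum_of_subset_of_nonneg (subset_univ _) fun j _ _ => hf j).trans hsum)
          (by positivity)
    _ = (Fintype.card α - 2).choose (l - 2) := mul_one _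

end Counting

lemma natCast_mul_measure_le_mul_sum_measure {Ω ι : Type*} [MeasurableSpace Ω] (μ : Measure Ω)
    [Fintype ι] (T : ι → Set Ω) [∀ ω p, Decidable (ω ∈ T p)] {L : Set Ω} {m k : ℕ}
    (h : ∀ ω ∈ L, m ≤ k * #{p | ω ∈ T p}) : m * μ L ≤ k * ∑ p, μ (T p) := by
  set g : Ω → ℝ≥0∞ := fun ω => ∑ p, (toMeasurable μ (T p)).indicator 1 ω
  have hg : Measurable g :=
    Finset.measurable_sum _ fun p _ => measurable_one.indicator (measurableSet_toMeasurable μ _)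
  have hL : L ⊆ {ω | (m : ℝ≥0∞) ≤ k * g ω} := fun ω hω => by
    calc (m : ℝ≥0∞) ≤ k * #{p | ω ∈ T p} := by exact_mod_cast h ω hω
      _ = k * ∑ p, (T p).indicator 1 ω := by
        simp only [card_filter, Set.indicator_apply, Pi.one_apply]
        push_cast
        rfl
      _ ≤ k * g ω := by
        refine mul_le_mul_right (sum_le_sum fun p _ => ?_) _
        exact Set.indicator_le_indicator_of_subset (f := (1 : Ω → ℝ≥0∞))
          (subset_toMeasurable μ _) (fun _ => zero_le) ω
  calc (m : ℝ≥0∞) * μ L ≤ m * μ {ω | (m : ℝ≥0∞) ≤ k * g ω} := by gcongr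
    _ ≤ ∫⁻ ω, k * g ω ∂μ := mul_meas_ge_le_lintegral (hg.const_mul _) _
    _ = k * ∑ p, μ (T p) := by
      rw [lintegral_const_mul _ hg, lintegral_finsetSum _ fun p _ =>
          measurable_one.indicator (measurableSet_toMeasurable μ (T p))]
      simp_rw [Pi.one_def, lintegral_indicator_const (measurableSet_toMeasurable μ _), one_mul,
        measure_toMeasurable]

/-- With `M = P * A`, `Mᵀ j₀` is `P A_{j₀}` and `M.submatrix id (↑)` is `P A_{J₀}`, so
`IsBalanced α κ l M j₀ J₀` is the balancing event `B_{α,κ}`. -/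
def IsBalanced {m ι : Type*} [Fintype m] [Fintype ι] (α κ l : ℝ) (M : Matrix m ι ℂ) (j₀ : ι)
    (J : Finset ι) : Prop :=
  α * opC (M.submatrix id ((↑) : J → ι)) ≤ e2 (Mᵀ j₀) ∧ κ * √l ≤ e2 (Mᵀ j₀)

lemma norm_le_of_isBalanced {m ρ ι : Type*} [Fintype m] [Fintype ρ] [Fintype ι] [DecidableEq ι]
    {α κ w l n : ℝ} (hα : 0 < α) (hκ : 0 < κ) (hl : 0 < l) (hn : 0 < n)
    {Q : Matrix m ρ ℂ} {B : Matrix ρ ι ℂ} {j₀ : ι} {J : Finset ι} (hj₀ : j₀ ∉ J)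
    (hQ : opC Q ≤ 1) (hker : ∀ j, j ≠ j₀ → j ∉ J → (Q * B)ᵀ j = 0)
    (hbal : IsBalanced α κ l (Q * B) j₀ J) {v : ι → ℂ} (hBv : e2 (B *ᵥ v) ≤ w / √n)
    (hvJ : ∑ j ∈ J, ‖v j‖ ^ 2 ≤ 2 * (l / n)) :
    ‖v j₀‖ ≤ (w / (κ * l) + √2 / α) * √(l / n) := by
  obtain ⟨hbal₁, hbal₂⟩ := hbal
  have hsn : 0 < √n := Real.sqrt_pos.mpr hn
  have hw : 0 ≤ w := by
    simpa [hsn.ne'] using mul_nonneg ((e2_nonneg _).trans hBv) hsn.le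
  have hQBv : e2 ((Q * B) *ᵥ v) ≤ w / √n := by
    rw [← mulVec_mulVec]
    exact (e2_mulVec_le Q _).trans (by nlinarith [e2_nonneg (B *ᵥ v)])
  have hN : opC ((Q * B).submatrix id ((↑) : J → ι)) ≤ e2 ((Q * B)ᵀ j₀) / α :=
    (le_div_iff₀' hα).mpr hbal₁
  have hvJ' : e2 (fun j : J => v j) ≤ √(2 * (l / n)) :=
    Real.sqrt_le_sqrt ((Finset.sum_coe_sort J fun j => ‖v j‖ ^ 2).trans_le hvJ)
  refine le_mul_sqrt_div_of_mul_le hκ hl hn hw hbal₂ ?_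
  calc ‖v j₀‖ * e2 ((Q * B)ᵀ j₀)
      ≤ e2 ((Q * B) *ᵥ v) + opC ((Q * B).submatrix id ((↑) : J → ι)) * e2 (fun j : J => v j) :=
        norm_mul_e2_transpose_le hj₀ hker v
    _ ≤ w / √n + e2 ((Q * B)ᵀ j₀) / α * √(2 * (l / n)) :=
        add_le_add hQBv (mul_le_mul hN hvJ' (e2_nonneg _) (div_nonneg (e2_nonneg _) hα.le))

lemma card_Lam (n l : ℕ) : Fintype.card (Lam n l) = n * (n - 1).choose (l - 1) := by
  let e : Lam n l ≃ Σ j : Fin n, {J : Finset (Fin n) // j ∉ J ∧ #J = l - 1} :=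
    Equiv.subtypeProdEquivSigmaSubtype fun j J => j ∉ J ∧ #J = l - 1
  rw [Fintype.card_congr e, Fintype.card_sigma]
  have hfibre (j : Fin n) : Fintype.card {J : Finset (Fin n) // j ∉ J ∧ #J = l - 1} =
      (n - 1).choose (l - 1) := by
    have hfilter : ({J | j ∉ J ∧ #J = l - 1} : Finset (Finset (Fin n))) =
        (univ.erase j).powersetCard (l - 1) := by
      ext J
      simp [subset_erase]
    rw [Fintype.card_subtype, hfilter, card_powersetCard, card_erase_of_mem (mem_univ j), card_fin]
  simp [hfibre]

open Classical in
lemma choose_le_two_mul_card_not_isBalanced {n l : ℕ} (hl1 : 1 ≤ l) (hln : l ≤ n) {α κ w : ℝ}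
    (hα : 0 < α) (hκ : 0 < κ) (B : Matrix (Fin n) (Fin n) ℂ) {l' : Lam n l → ℕ}
    (Q : (p : Lam n l) → Matrix (Fin (l' p)) (Fin n) ℂ) (hQ : ∀ p, opC (Q p) ≤ 1)
    (hker : ∀ (p : Lam n l) j, j ≠ p.1.1 → j ∉ p.1.2 → (Q p * B)ᵀ j = 0) {v : Fin n → ℂ}
    (hv : e2 v = 1) (hloc : (w / (κ * l) + √2 / α) * √(l / n) < einf v)
    (hBv : e2 (B *ᵥ v) ≤ w / √n) :
    (n - 1).choose (l - 1) ≤ 2 * #{p : Lam n l | ¬ IsBalanced α κ l (Q p * B) p.1.1 p.1.2} := by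
  have hn : 0 < n := hl1.trans hln
  have : Nonempty (Fin n) := ⟨⟨0, hn⟩⟩
  obtain ⟨j₀, -, hj₀⟩ := exists_max_image univ (fun i => ‖v i‖) univ_nonempty
  have heinf : einf v = ‖v j₀‖ :=
    le_antisymm (ciSup_le fun i => hj₀ i (mem_univ i))
      (le_ciSup (f := fun i => ‖v i‖) (Finite.bddAbove_range _) j₀)
  have hsum : ∑ j, ‖v j‖ ^ 2 = 1 := Real.sqrt_eq_one.mp hv
  have hgood := choose_le_two_mul_card_filter_sum_le (α := Fin n) hl1 (by simpa using hln) j₀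
    (f := fun j => ‖v j‖ ^ 2) (fun _ => by positivity) hsum.le
  rw [Fintype.card_fin] at hgood
  refine hgood.trans (Nat.mul_le_mul_left 2 (card_le_card_of_surjOn (fun p => p.1.2) ?_))
  intro J hJ
  rw [mem_coe, mem_filter, mem_powersetCard, subset_erase] at hJ
  refine ⟨⟨(j₀, J), hJ.1.1.2, hJ.1.2⟩,
    mem_coe.mpr (mem_filter.mpr ⟨mem_univ _, fun hbal => ?_⟩), rfl⟩
  have := norm_le_of_isBalanced hα hκ (by positivity) (by positivity) hJ.1.1.2 (hQ _)
    (hker ⟨(j₀, J), _⟩) hbal hBv hJ.2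
  linarith

theorem delocalization_from_test_projection_general
    (n l : ℕ) (hl1 : 1 ≤ l) (hln : l ≤ n)
    (Ω : Type) [MeasureSpace Ω] [IsProbabilityMeasure (ℙ : Measure Ω)]
    (A : Ω → Matrix (Fin n) (Fin n) ℂ)
    (l' : Lam n l → ℕ)
    (P : (p : Lam n l) → Ω → Matrix (Fin (l' p)) (Fin n) ℂ)
    (hPnorm : ∀ p ω, opC (P p ω) ≤ 1)
    (hPker : ∀ (p : Lam n l) (ω : Ω) (j : Fin n), j ≠ p.1.1 → j ∉ p.1.2 →
      (P p ω).mulVec (fun i => A ω i j) = 0)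
    (α κ w : ℝ) (hα : 0 < α) (hκ : 0 < κ)
    (W : ℝ) (hW : W = w / (κ * l) + Real.sqrt 2 / α) :
    (ℙ {ω : Ω | ∃ v : Fin n → ℂ, e2 v = 1 ∧
        W * Real.sqrt ((l : ℝ) / n) < einf v ∧
        e2 ((A ω).mulVec v) ≤ w / Real.sqrt n}).toReal ≤
      2 * n *
        ((∑ p : Lam n l,
          (ℙ {ω : Ω | ¬ (α * opC (Matrix.of fun (r : Fin (l' p)) (j : {x // x ∈ p.1.2}) =>
                  (P p ω).mulVec (fun i => A ω i j.1) r) ≤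
                e2 ((P p ω).mulVec (fun i => A ω i p.1.1)) ∧
              κ * Real.sqrt l ≤ e2 ((P p ω).mulVec (fun i => A ω i p.1.1)))}).toReal) /
          Fintype.card (Lam n l)) := by
  classical
  set L := {ω : Ω | ∃ v : Fin n → ℂ, e2 v = 1 ∧ W * √(l / n) < einf v ∧ e2 (A ω *ᵥ v) ≤ w / √n}
  set T : Lam n l → Set Ω := fun p => {ω | ¬ IsBalanced α κ l (P p ω * A ω) p.1.1 p.1.2}
  have hcount : ∀ ω ∈ L, (n - 1).choose (l - 1) ≤ 2 * #{p | ω ∈ T p} :=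
    fun ω ⟨v, hv, hloc, hAv⟩ => choose_le_two_mul_card_not_isBalanced hl1 hln hα hκ (A ω)
      (fun p => P p ω) (fun p => hPnorm p ω) (fun p => hPker p ω) hv (hW ▸ hloc) hAv
  change (ℙ L).toReal ≤ 2 * n * ((∑ p, (ℙ (T p)).toReal) / Fintype.card (Lam n l))
  have hmeas := ENNReal.toReal_mono (by simp [ENNReal.mul_eq_top, measure_ne_top])
    (natCast_mul_measure_le_mul_sum_measure ℙ T hcount)
  rw [ENNReal.toReal_mul, ENNReal.toReal_mul, ENNReal.toReal_sum fun p _ => measure_ne_top _ _,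
    ENNReal.toReal_natCast, ENNReal.toReal_natCast] at hmeas
  have hC : (0 : ℝ) < (n - 1).choose (l - 1) := by exact_mod_cast Nat.choose_pos (by omega)
  have hn : (0 : ℝ) < n := by exact_mod_cast hl1.trans hln
  rw [card_Lam, Nat.cast_mul, mul_div_assoc', mul_div_mul_comm, mul_div_cancel_right₀ _ hn.ne',
    ← mul_div_assoc, le_div_iff₀ hC]
  push_cast at hmeas
  linarith

/-- **Delocalization from a test projection.**  Suppose that to each pair
`(j₀, J₀) ∈ Λ(n,l)` corresponds a number `l' ≤ n` and an `l' × n` random matrix `P`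
with `‖P‖ ≤ 1` whose kernel contains all columns `A_j`, `j ∉ {j₀} ∪ J₀`.  Then
`P(L_{W,w}) ≤ 2n · E_{(j₀,J₀)} P(B_{α,κ}ᶜ | (j₀,J₀))`, where `L_{W,w}` is the
localization event and `B_{α,κ}` the balancing event. -/
theorem delocalization_from_test_projection
    (n l : ℕ) (hl1 : 1 ≤ l) (hln : l ≤ n)
    (Ω : Type) [MeasureSpace Ω] [IsProbabilityMeasure (ℙ : Measure Ω)]
    (A : Ω → Matrix (Fin n) (Fin n) ℂ)
    (l' : Lam n l → ℕ) (hl'n : ∀ p, l' p ≤ n)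
    (P : (p : Lam n l) → Ω → Matrix (Fin (l' p)) (Fin n) ℂ)
    (hPnorm : ∀ p ω, opC (P p ω) ≤ 1)
    (hPker : ∀ (p : Lam n l) (ω : Ω) (j : Fin n), j ≠ p.1.1 → j ∉ p.1.2 →
      (P p ω).mulVec (fun i => A ω i j) = 0)
    (α κ w : ℝ) (hα : 0 < α) (hκ : 0 < κ) (hw : 0 < w)
    (W : ℝ) (hW : W = w / (κ * l) + Real.sqrt 2 / α) :
    (ℙ {ω : Ω | ∃ v : Fin n → ℂ, e2 v = 1 ∧
        W * Real.sqrt ((l : ℝ) / n) < einf v ∧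
        e2 ((A ω).mulVec v) ≤ w / Real.sqrt n}).toReal ≤
      2 * n *
        ((∑ p : Lam n l,
          (ℙ {ω : Ω | ¬ (α * opC (Matrix.of fun (r : Fin (l' p)) (j : {x // x ∈ p.1.2}) =>
                  (P p ω).mulVec (fun i => A ω i j.1) r) ≤
                e2 ((P p ω).mulVec (fun i => A ω i p.1.1)) ∧
              κ * Real.sqrt l ≤ e2 ((P p ω).mulVec (fun i => A ω i p.1.1)))}).toReal) /
          Fintype.card (Lam n l)) :=
  delocalization_from_test_projection_general n l hl1 hln Ω A l' P hPnorm hPker α κ w hα hκ W hW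
end
end

section
/- Let 1 ≤ l ≤ n and let v ∈ ℂⁿ with ‖v‖₂ = 1. If (j₀, J₀) is chosen uniformly at random from Λ(n,l), then the event V_v = { |v_{j₀}| = ‖v‖_∞ and Σ_{j ∈ J₀} |v_j|² ≤ 2l/n } has probability P(V_v) ≥ 1/(2n). -/
/-!
Fix a coordinate `j₀` at which `|v_j|` is maximal. The pairs `(j₀, J)` make up a `1/n` share of
`Λ(n,l)`, with `J` ranging over the `(l-1)`-subsets of `[n] \ {j₀}`. Averaged over these `J`,
`∑_{j ∈ J} |v_j|²` equals `(l-1)/(n-1) · ∑_{j ≠ j₀} |v_j|² ≤ l/n`, so by Markov's inequality at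
least half of them satisfy `∑_{j ∈ J} |v_j|² ≤ 2l/n`.
-/

open MeasureTheory

noncomputable section

/-- `Λ(n,l)` as a finset: pairs `(j₀, J₀)` with `j₀ ∈ [n]`, `J₀ ⊆ [n] \ {j₀}`,
`|J₀| = l - 1`. -/
def LamF (n l : ℕ) : Finset (Fin n × Finset (Fin n)) :=
  Finset.univ.filter (fun p => p.1 ∉ p.2 ∧ p.2.card = l - 1)

open Finset

section Averaging

variable {α : Type*} [DecidableEq α]

lemma card_mul_card_filter_mem_powersetCard (T : Finset α) {j : α} (hj : j ∈ T) (k : ℕ) :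
    #T * #{J ∈ T.powersetCard k | j ∈ J} = k * #(T.powersetCard k) := by
  obtain _ | k := k
  · simp
  obtain ⟨m, hm⟩ : ∃ m, #T = m + 1 := Nat.exists_eq_add_one_of_ne_zero (card_ne_zero_of_mem hj)
  have hcount := card_filter_powersetCard_subset {j} T (k + 1) (by simpa) (by simp)
  simp only [singleton_subset_iff, card_singleton, Nat.add_sub_cancel] at hcount
  rw [hcount, card_powersetCard, hm, Nat.add_sub_cancel, Nat.add_one_mul_choose_eq, mul_comm]

lemma card_mul_sum_powersetCard_sum {R : Type*} [CommSemiring R] (T : Finset α) (k : ℕ)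
    (w : α → R) :
    #T * ∑ J ∈ T.powersetCard k, ∑ j ∈ J, w j = k * #(T.powersetCard k) * ∑ j ∈ T, w j := by
  have hswap : ∑ J ∈ T.powersetCard k, ∑ j ∈ J, w j
      = ∑ j ∈ T, #{J ∈ T.powersetCard k | j ∈ J} * w j := by
    rw [sum_comm' (t' := T) (s' := fun j => {J ∈ T.powersetCard k | j ∈ J})]
    · simp [sum_const, nsmul_eq_mul]
    · intro J j
      simp only [mem_filter, mem_powersetCard]
      exact ⟨fun h => ⟨h, h.1.1 h.2⟩, And.left⟩
  rw [hswap, mul_sum, mul_sum]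
  refine sum_congr rfl fun j hj => ?_
  rw [← mul_assoc, ← Nat.cast_mul, card_mul_card_filter_mem_powersetCard T hj k, Nat.cast_mul]

/-- Replacing the exact average `k / #T` by `(k + 1) / (#T + 1)` avoids dividing by `#T = 0`. -/
lemma card_add_one_mul_sum_powersetCard_sum_le {R : Type*} [CommSemiring R] [PartialOrder R]
    [IsOrderedRing R] (T : Finset α) (k : ℕ) {w : α → R} (hw : ∀ j ∈ T, 0 ≤ w j) :
    (#T + 1) * ∑ J ∈ T.powersetCard k, ∑ j ∈ J, w j
      ≤ (k + 1) * #(T.powersetCard k) * ∑ j ∈ T, w j := by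
  have hsub : ∑ J ∈ T.powersetCard k, ∑ j ∈ J, w j ≤ #(T.powersetCard k) * ∑ j ∈ T, w j := by
    rw [← nsmul_eq_mul, ← sum_const]
    exact sum_le_sum fun J hJ =>
      sum_le_sum_of_subset_of_nonneg (mem_powersetCard.mp hJ).1 fun j hj _ => hw j hj
  calc (#T + 1) * ∑ J ∈ T.powersetCard k, ∑ j ∈ J, w j
      = k * #(T.powersetCard k) * ∑ j ∈ T, w j + ∑ J ∈ T.powersetCard k, ∑ j ∈ J, w j := by
        rw [add_mul, one_mul, card_mul_sum_powersetCard_sum]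
    _ ≤ k * #(T.powersetCard k) * ∑ j ∈ T, w j + #(T.powersetCard k) * ∑ j ∈ T, w j := by
        gcongr
    _ = (k + 1) * #(T.powersetCard k) * ∑ j ∈ T, w j := by ring

end Averaging

lemma card_le_two_mul_card_filter_le {ι R : Type*} [Field R] [LinearOrder R]
    [IsStrictOrderedRing R] (S : Finset ι) {f : ι → R} (hf : ∀ s ∈ S, 0 ≤ f s) {c : R} (hc : 0 < c)
    (hsum : 2 * ∑ s ∈ S, f s ≤ c * #S) :
    #S ≤ 2 * #{s ∈ S | f s ≤ c} := by
  have hmarkov : c * #{s ∈ S | ¬ f s ≤ c} ≤ ∑ s ∈ S, f s := by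
    calc c * #{s ∈ S | ¬ f s ≤ c} = #{s ∈ S | ¬ f s ≤ c} • c := by rw [nsmul_eq_mul, mul_comm]
      _ ≤ ∑ s ∈ S with ¬ f s ≤ c, f s :=
          card_nsmul_le_sum _ _ _ fun s hs => (not_le.mp (mem_filter.mp hs).2).le
      _ ≤ ∑ s ∈ S, f s := sum_le_sum_of_subset_of_nonneg (filter_subset _ _) fun s hs _ => hf s hs
  have hsplit := card_filter_add_card_filter_not (s := S) (fun s => f s ≤ c)
  have hbad : (2 * #{s ∈ S | ¬ f s ≤ c} : R) ≤ #S :=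
    le_of_mul_le_mul_left (by linarith) hc
  have : 2 * #{s ∈ S | ¬ f s ≤ c} ≤ #S := by exact_mod_cast hbad
  omega

lemma card_le_two_mul_card_filter_sum_le {α : Type*} [DecidableEq α] (T : Finset α) (k : ℕ)
    {w : α → ℝ} (hw : ∀ j ∈ T, 0 ≤ w j) (hT : ∑ j ∈ T, w j ≤ 1) :
    #(T.powersetCard k)
      ≤ 2 * #{J ∈ T.powersetCard k | ∑ j ∈ J, w j ≤ 2 * (k + 1) / (#T + 1)} := by
  refine card_le_two_mul_card_filter_le _ (fun J hJ => sum_nonneg fun j hj =>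
    hw j ((mem_powersetCard.mp hJ).1 hj)) (by positivity) ?_
  have hbound := card_add_one_mul_sum_powersetCard_sum_le T k hw
  have hT' : (k + 1) * #(T.powersetCard k) * ∑ j ∈ T, w j ≤ (k + 1) * #(T.powersetCard k) :=
    mul_le_of_le_one_right (by positivity) hT
  rw [div_mul_eq_mul_div, le_div_iff₀ (by positivity)]
  linarith

lemma sum_sq_norm_eq_one {ι : Type*} [Fintype ι] {v : ι → ℂ} (hv : e2 v = 1) :
    ∑ i, ‖v i‖ ^ 2 = 1 :=
  Real.sqrt_eq_one.mp hv

lemma exists_norm_eq_einf {n : ℕ} (hn : 0 < n) (v : Fin n → ℂ) : ∃ j, ‖v j‖ = einf v :=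
  have : Nonempty (Fin n) := ⟨⟨0, hn⟩⟩
  exists_eq_ciSup_of_finite

lemma mk_mem_LamF {n l : ℕ} {j : Fin n} {J : Finset (Fin n)} :
    (j, J) ∈ LamF n l ↔ J ∈ (univ.erase j).powersetCard (l - 1) := by
  simp [LamF, subset_erase]

lemma card_LamF (n l : ℕ) : #(LamF n l) = n * (n - 1).choose (l - 1) := by
  have hfiber (j : Fin n) : {p ∈ LamF n l | p.1 = j}
      = ((univ.erase j).powersetCard (l - 1)).map (Function.Embedding.sectR j _) := by
    ext ⟨j', J⟩
    simp only [mem_filter, mem_map, Function.Embedding.sectR_apply, Prod.mk.injEq]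
    constructor
    · rintro ⟨hp, rfl⟩
      exact ⟨J, mk_mem_LamF.mp hp, rfl, rfl⟩
    · rintro ⟨J, hJ, rfl, rfl⟩
      exact ⟨mk_mem_LamF.mpr hJ, rfl⟩
  rw [card_eq_sum_card_fiberwise (f := Prod.fst) (t := univ) fun _ _ => mem_univ _]
  simp [hfiber, card_erase_of_mem]

/-- **Balancing the coefficients of `v`.**  If `(j₀, J₀)` is chosen uniformly at random
from `Λ(n,l)`, then the event
`V_v = { |v_{j₀}| = ‖v‖_∞ and Σ_{j ∈ J₀} |v_j|² ≤ 2l/n }` has probability at least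
`1/(2n)`. -/
theorem balancing_coefficients (n l : ℕ) (hl1 : 1 ≤ l) (hln : l ≤ n)
    (v : Fin n → ℂ) (hv : e2 v = 1) :
    (1 : ℝ) / (2 * n) ≤
      (((LamF n l).filter (fun p =>
          ‖v p.1‖ = einf v ∧ ∑ j ∈ p.2, ‖v j‖ ^ 2 ≤ 2 * (l : ℝ) / n)).card : ℝ) /
        ((LamF n l).card : ℝ) := by
  classical
  have hn : 0 < n := by omega
  obtain ⟨j₀, hj₀⟩ := exists_norm_eq_einf hn v
  set S := (univ.erase j₀).powersetCard (l - 1)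
  have hhalf : #S ≤ 2 * #{J ∈ S | ∑ j ∈ J, ‖v j‖ ^ 2 ≤ 2 * (l : ℝ) / n} := by
    have h := card_le_two_mul_card_filter_sum_le (univ.erase j₀) (l - 1)
      (w := fun j => ‖v j‖ ^ 2) (fun _ _ => by positivity)
      ((sum_le_univ_sum_of_nonneg fun _ => by positivity).trans (sum_sq_norm_eq_one hv).le)
    rwa [card_erase_of_mem (mem_univ _), card_univ, Fintype.card_fin, Nat.cast_sub hn,
      Nat.cast_sub hl1, Nat.cast_one, sub_add_cancel, sub_add_cancel] at h
  have hevent : #{J ∈ S | ∑ j ∈ J, ‖v j‖ ^ 2 ≤ 2 * (l : ℝ) / n} ≤ #{p ∈ LamF n l |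
      ‖v p.1‖ = einf v ∧ ∑ j ∈ p.2, ‖v j‖ ^ 2 ≤ 2 * (l : ℝ) / n} :=
    card_le_card_of_injOn (j₀, ·) (fun J hJ => by
      simp only [coe_filter, Set.mem_ofPred_eq] at hJ ⊢
      exact ⟨mk_mem_LamF.mpr hJ.1, hj₀, hJ.2⟩) fun _ _ _ _ h => congrArg Prod.snd h
  have hS : #S = (n - 1).choose (l - 1) := by
    rw [card_powersetCard, card_erase_of_mem (mem_univ _), card_univ, Fintype.card_fin]
  have hS_pos : 0 < #S := hS ▸ Nat.choose_pos (by omega)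
  have hgood := (Nat.cast_le (α := ℝ)).mpr (hhalf.trans (Nat.mul_le_mul_left 2 hevent))
  rw [card_LamF, ← hS, div_le_div_iff₀ (by positivity) (by positivity)]
  push_cast at hgood ⊢
  nlinarith

end
end

section
/- Let l' ≤ l ≤ n and let Q be an l' × n complex matrix of the following form: for i ≤ l', the i-th row of Q is q_i = (0,…,0, q_{ii}, 0,…,0, q̄_iᵀ), i.e. Q_{ij} = 0 for all j ≤ l with j ≠ i, Q_{ii} = q_{ii}, and the entries in columns l+1,…,n are arbitrary. Assume the rows q₁,…,q_{l'} of Q are linearly independent. Let P be any l' × n matrix with orthonormal rows whose row span equals the row span of Q. Then: (i) the quantities ‖P e_i‖₂, i ≤ n, are determined by Q and do not depend on the choice of such P; (ii) for every i ≤ l', ‖P e_i‖₂ = |q_{ii}| / d(q_i, E_i), where E_i = span( q_j : j ≤ l', j ≠ i ); (iii) ‖P e_i‖₂ = 0 for every l' < i ≤ l. -/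
/-!
Since the rows of `P` are orthonormal and span the row space `W` of `Q`, the column norm
`‖P e_i‖` is the norm of the orthogonal projection of `e_i` onto `W`, so it depends on `W` only.
For `l' ≤ i < l` the vector `e_i` is orthogonal to every row of `Q`, so this projection vanishes.
For `i < l'` it is orthogonal to the rows `q_j`, `j ≠ i`, spanning `E_i`; writing
`W = E_i ⊕ ℂ w` with `w = q_i - proj_{E_i} q_i`, the projection of `e_i` onto `W` is its
projection onto the line `ℂ w`, of norm `|⟪w, e_i⟫| / ‖w‖ = |q_ii| / d(q_i, E_i)`.
-/

noncomputable section

/-- Euclidean distance from a point to a subspace of `ℂⁿ`. -/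
def distC {n : ℕ} (x : Fin n → ℂ) (E : Submodule ℂ (Fin n → ℂ)) : ℝ :=
  ⨅ y : E, e2 (x - (y : Fin n → ℂ))

/-- `P` has orthonormal rows and the same row span as `Q`. -/
def IsOrthoRowBasisOf {l' n : ℕ} (P Q : Matrix (Fin l') (Fin n) ℂ) : Prop :=
  P * Matrix.conjTranspose P = 1 ∧
    Submodule.span ℂ (Set.range fun i => P i) = Submodule.span ℂ (Set.range fun i => Q i)

open Submodule Set
open scoped InnerProductSpace Matrix

section InnerProductSpace

variable {𝕜 F : Type*} [RCLike 𝕜] [NormedAddCommGroup F] [InnerProductSpace 𝕜 F]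

theorem Submodule.mem_orthogonal_span_iff {s : Set F} {x : F} :
    x ∈ (span 𝕜 s)ᗮ ↔ ∀ u ∈ s, ⟪u, x⟫_𝕜 = 0 := by
  rw [← span_singleton_le_iff_mem, ← isOrtho_iff_le, isOrtho_comm, isOrtho_span]
  simp

theorem Orthonormal.starProjection_span_range_eq_sum {ι : Type*} [Fintype ι] {v : ι → F}
    (hv : Orthonormal 𝕜 v) [(span 𝕜 (range v)).HasOrthogonalProjection] (x : F) :
    (span 𝕜 (range v)).starProjection x = ∑ i, ⟪v i, x⟫_𝕜 • v i := by
  refine eq_starProjection_of_mem_orthogonal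
    (sum_mem fun i _ => smul_mem _ _ (subset_span (mem_range_self i))) ?_
  rw [mem_orthogonal_span_iff]
  rintro _ ⟨j, rfl⟩
  rw [inner_sub_right, hv.inner_right_fintype, sub_self]

theorem Orthonormal.norm_starProjection_span_range {ι : Type*} [Fintype ι] {v : ι → F}
    (hv : Orthonormal 𝕜 v) [(span 𝕜 (range v)).HasOrthogonalProjection] (x : F) :
    ‖(span 𝕜 (range v)).starProjection x‖ = √(∑ i, ‖⟪v i, x⟫_𝕜‖ ^ 2) := by
  rw [eq_comm, Real.sqrt_eq_iff_eq_sq (by positivity) (norm_nonneg _),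
    @norm_sq_eq_re_inner 𝕜, hv.starProjection_span_range_eq_sum, hv.inner_sum]
  simp only [RCLike.conj_mul, map_sum, ← RCLike.ofReal_pow, RCLike.ofReal_re]

theorem Submodule.norm_starProjection_sup_span_singleton {K : Submodule 𝕜 F}
    [K.HasOrthogonalProjection] (u : F) [(K ⊔ 𝕜 ∙ u).HasOrthogonalProjection] {x : F} (hx : x ∈ Kᗮ) :
    ‖(K ⊔ 𝕜 ∙ u).starProjection x‖ = ‖⟪u, x⟫_𝕜‖ / ‖u - K.starProjection u‖ := by
  set w := u - K.starProjection u
  have hwK : w ∈ Kᗮ := K.sub_starProjection_mem_orthogonal u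
  have hwx : ⟪w, x⟫_𝕜 = ⟪u, x⟫_𝕜 := by
    rw [inner_sub_left, inner_right_of_mem_orthogonal (K.starProjection_apply_mem u) hx, sub_zero]
  have hproj : (K ⊔ 𝕜 ∙ u).starProjection x = (𝕜 ∙ w).starProjection x := by
    set p := (𝕜 ∙ w).starProjection x
    have hw : w ∈ K ⊔ 𝕜 ∙ u :=
      sub_mem (mem_sup_right (mem_span_singleton_self u))
        (mem_sup_left (K.starProjection_apply_mem u))
    have hp : p ∈ 𝕜 ∙ w := starProjection_apply_mem _ x
    have hxpK : x - p ∈ Kᗮ := sub_mem hx ((span_singleton_le_iff_mem _ _).mpr hwK hp)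
    have hxpw : x - p ∈ (𝕜 ∙ w)ᗮ := sub_starProjection_mem_orthogonal x
    refine eq_starProjection_of_mem_orthogonal ((span_singleton_le_iff_mem _ _).mpr hw hp) ?_
    rw [← inf_orthogonal]
    refine ⟨hxpK, mem_orthogonal_singleton_iff_inner_right.mpr ?_⟩
    rw [← sub_add_cancel u (K.starProjection u), inner_add_left,
      inner_right_of_mem_orthogonal (mem_span_singleton_self w) hxpw,
      inner_right_of_mem_orthogonal (K.starProjection_apply_mem u) hxpK, add_zero]
  rw [hproj, starProjection_singleton, norm_smul, hwx]
  -- If `u ∈ K`, then `w = 0` and both sides vanish, the right one because `a / 0 = 0`.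
  rcases eq_or_ne ‖w‖ 0 with hw | hw
  · simp [hw]
  · simp only [norm_div, RCLike.norm_ofReal, abs_pow, abs_norm]
    field_simp

end InnerProductSpace

section EuclideanSpace

variable {𝕜 : Type*} [RCLike 𝕜] {m n : Type*}

abbrev Submodule.toEuclideanSpace (S : Submodule 𝕜 (n → 𝕜)) : Submodule 𝕜 (EuclideanSpace 𝕜 n) :=
  S.map (WithLp.linearEquiv 2 𝕜 (n → 𝕜)).symm.toLinearMap

theorem Submodule.toEuclideanSpace_span (s : Set (n → 𝕜)) :
    (span 𝕜 s).toEuclideanSpace = span 𝕜 (WithLp.toLp 2 '' s) :=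
  map_span _ _

theorem single_mem_orthogonal_toEuclideanSpace_span_iff [Fintype n] [DecidableEq n]
    (s : Set (n → 𝕜)) (i : n) :
    EuclideanSpace.single i 1 ∈ (span 𝕜 s).toEuclideanSpaceᗮ ↔ ∀ x ∈ s, x i = 0 := by
  simp [toEuclideanSpace_span, mem_orthogonal_span_iff, EuclideanSpace.inner_single_right]

theorem toEuclideanSpace_span_range_eq_sup (Q : m → n → 𝕜) (i : m) :
    (span 𝕜 (range Q)).toEuclideanSpace =
      (span 𝕜 {x | ∃ j, j ≠ i ∧ x = Q j}).toEuclideanSpace ⊔ 𝕜 ∙ WithLp.toLp 2 (Q i) := by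
  have hrange : range Q = insert (Q i) {x | ∃ j, j ≠ i ∧ x = Q j} := by
    ext x
    constructor
    · rintro ⟨j, rfl⟩
      rcases eq_or_ne j i with rfl | hj
      · exact Or.inl rfl
      · exact Or.inr ⟨j, hj, rfl⟩
    · rintro (rfl | ⟨j, -, rfl⟩) <;> exact mem_range_self _
  rw [hrange, span_insert, sup_comm]
  simp only [toEuclideanSpace, Submodule.map_sup, map_span, image_singleton]
  rfl

theorem Matrix.orthonormal_toLp_rows [Fintype n] [DecidableEq m] {A : Matrix m n 𝕜}
    (h : A * Aᴴ = 1) :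
    Orthonormal 𝕜 fun r => WithLp.toLp 2 (A r) := by
  rw [orthonormal_iff_ite]
  intro r s
  have hsr := congrFun (congrFun h s) r
  simp only [Matrix.mul_apply, Matrix.conjTranspose_apply, Matrix.one_apply] at hsr
  simpa [PiLp.inner_apply, eq_comm] using hsr

end EuclideanSpace

theorem e2_eq_norm_toLp {ι : Type*} [Fintype ι] (v : ι → ℂ) : e2 v = ‖WithLp.toLp 2 v‖ := by
  rw [EuclideanSpace.norm_eq]
  rfl

theorem distC_eq_norm_sub_starProjection {n : ℕ} (x : Fin n → ℂ)
    (S : Submodule ℂ (Fin n → ℂ)) :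
    distC x S = ‖WithLp.toLp 2 x - S.toEuclideanSpace.starProjection (WithLp.toLp 2 x)‖ := by
  rw [starProjection_minimal, distC]
  refine (LinearEquiv.submoduleMap _ S).toEquiv.iInf_congr fun y => ?_
  rw [e2_eq_norm_toLp, WithLp.toLp_sub]
  rfl

theorem IsOrthoRowBasisOf.e2_col_eq_norm_starProjection {l' n : ℕ}
    {P Q : Matrix (Fin l') (Fin n) ℂ} (hP : IsOrthoRowBasisOf P Q) (i : Fin n) :
    e2 (fun r => P r i) = ‖(span ℂ (range fun r => Q r)).toEuclideanSpace.starProjection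
      (EuclideanSpace.single i 1)‖ := by
  simp only [← hP.2, toEuclideanSpace_span, ← range_comp, Function.comp_def]
  rw [(Matrix.orthonormal_toLp_rows hP.1).norm_starProjection_span_range, e2]
  simp [EuclideanSpace.inner_single_right]

theorem column_norms_via_distances_general (n l l' : ℕ) (hl'l : l' ≤ l) (hln : l ≤ n)
    (Q : Matrix (Fin l') (Fin n) ℂ)
    (hQ0 : ∀ (i : Fin l') (j : Fin n), (j : ℕ) < l → (j : ℕ) ≠ (i : ℕ) → Q i j = 0) :
    (∀ P P' : Matrix (Fin l') (Fin n) ℂ, IsOrthoRowBasisOf P Q → IsOrthoRowBasisOf P' Q →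
      ∀ i : Fin n, e2 (fun r => P r i) = e2 (fun r => P' r i)) ∧
    (∀ P : Matrix (Fin l') (Fin n) ℂ, IsOrthoRowBasisOf P Q →
      ∀ i : Fin l',
        e2 (fun r => P r ⟨(i : ℕ), lt_of_lt_of_le i.isLt (le_trans hl'l hln)⟩) =
          ‖Q i ⟨(i : ℕ), lt_of_lt_of_le i.isLt (le_trans hl'l hln)⟩‖ /
            distC (Q i) (Submodule.span ℂ {x | ∃ j : Fin l', j ≠ i ∧ x = Q j})) ∧
    (∀ P : Matrix (Fin l') (Fin n) ℂ, IsOrthoRowBasisOf P Q →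
      ∀ i : Fin n, l' ≤ (i : ℕ) → (i : ℕ) < l → e2 (fun r => P r i) = 0) := by
  refine ⟨fun P P' hP hP' i => by
    rw [hP.e2_col_eq_norm_starProjection, hP'.e2_col_eq_norm_starProjection], ?_, ?_⟩
  · intro P hP i
    simp only [hP.e2_col_eq_norm_starProjection, toEuclideanSpace_span_range_eq_sup _ i]
    rw [norm_starProjection_sup_span_singleton, distC_eq_norm_sub_starProjection,
      EuclideanSpace.inner_single_right, one_mul, RCLike.norm_conj]
    refine (single_mem_orthogonal_toEuclideanSpace_span_iff _ _).mpr ?_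
    rintro _ ⟨j, hji, rfl⟩
    exact hQ0 j _ (i.isLt.trans_le hl'l) fun h => hji (Fin.ext h.symm)
  · intro P hP i hl'i hil
    rw [hP.e2_col_eq_norm_starProjection, (starProjection_apply_eq_zero_iff _).mpr, norm_zero]
    refine (single_mem_orthogonal_toEuclideanSpace_span_iff _ _).mpr ?_
    rintro _ ⟨r, rfl⟩
    exact hQ0 r i hil (by omega)

/-- **Norms of columns of `P` via distances.**  Let `Q` be an `l' × n` matrix whose
`i`-th row has all entries in the first `l` columns equal to zero except possibly the
diagonal one `q_{ii}`, and whose rows are linearly independent.  Let `P` be any matrix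
with orthonormal rows and the same row span as `Q`.  Then the column norms `‖P e_i‖₂`
do not depend on the choice of `P`; for `i ≤ l'` one has
`‖P e_i‖₂ = |q_{ii}| / d(q_i, E_i)` with `E_i` the span of the other rows; and
`‖P e_i‖₂ = 0` for `l' < i ≤ l`.  (Indices are `0`-based.) -/
theorem column_norms_via_distances (n l l' : ℕ) (hl'l : l' ≤ l) (hln : l ≤ n)
    (Q : Matrix (Fin l') (Fin n) ℂ)
    (hQ0 : ∀ (i : Fin l') (j : Fin n), (j : ℕ) < l → (j : ℕ) ≠ (i : ℕ) → Q i j = 0)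
    (hQind : LinearIndependent ℂ fun i : Fin l' => Q i) :
    (∀ P P' : Matrix (Fin l') (Fin n) ℂ, IsOrthoRowBasisOf P Q → IsOrthoRowBasisOf P' Q →
      ∀ i : Fin n, e2 (fun r => P r i) = e2 (fun r => P' r i)) ∧
    (∀ P : Matrix (Fin l') (Fin n) ℂ, IsOrthoRowBasisOf P Q →
      ∀ i : Fin l',
        e2 (fun r => P r ⟨(i : ℕ), lt_of_lt_of_le i.isLt (le_trans hl'l hln)⟩) =
          ‖Q i ⟨(i : ℕ), lt_of_lt_of_le i.isLt (le_trans hl'l hln)⟩‖ /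
            distC (Q i) (Submodule.span ℂ {x | ∃ j : Fin l', j ≠ i ∧ x = Q j})) ∧
    (∀ P : Matrix (Fin l') (Fin n) ℂ, IsOrthoRowBasisOf P Q →
      ∀ i : Fin n, l' ≤ (i : ℕ) → (i : ℕ) < l → e2 (fun r => P r i) = 0) :=
  column_norms_via_distances_general n l l' hl'l hln Q hQ0

end
end
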